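/- Let D^t ⊆ ℝ^n be open and D^z ⊆ ℝ^s be open and symmetric under componentwise sign changes. Let f : D^t → ℝ and cE : D^t × D^z → ℝ^{m₁}, cI : D^t × D^z → ℝ^{m₂}, cZ : D^t × D^z → ℝ^s be twice continuously differentiable, with ∂₂cZ(t,r) strictly lower triangular for all (t,r) ∈ D^t × D^z. Let (t*, z*) ∈ D^t × D^z be feasible (cE(t*,|z*|) = 0, cI(t*,|z*|) ≥ 0, cZ(t*,|z*|) = z*) and a local minimizer of (t,z) ↦ f(t) over F = {(t,z) ∈ D^t × D^z : cE(t,|z|) = 0, cI(t,|z|) ≥ 0, cZ(t,|z|) = z}. Let σ = sign(z*), Σ = diag(σ), α = {i : z*ᵢ = 0}, α^c its complement, A = {i : cIᵢ(t*,|z*|) = 0}, W = (I − ∂₂cZ*Σ)⁻¹∂₁cZ*, and assume LIKQ: the matrix J = [[∂₁cE* + ∂₂cE*ΣW], [P_A(∂₁cI* + ∂₂cI*ΣW)], [P_α W]] has full row rank, where a star denotes evaluation at (t*,|z*|). Let (λ_E, λ_I, λ_Z) be multipliers satisfying the kink stationarity conditions at (t*, z*). Then for every d ∈ ℝ^n with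 Jd = 0, setting d_s = P_{α^c}ᵀP_{α^c}ΣW d ∈ ℝ^s, one has (d, d_s)ᵀ H (d, d_s) ≥ 0, where H ∈ ℝ^{(n+s)×(n+s)} is the Hessian with respect to (t, r) ∈ ℝ^n × ℝ^s of the function (t,r) ↦ f(t) + λ_Eᵀ cE(t,r) − λ_Iᵀ cI(t,r) + λ_Zᵀ cZ(t,r), evaluated at (t*, |z*|). -/

import Mathlib

open Matrix
open scoped Classical

noncomputable section

/-- Selection matrix `P_S` whose rows are the unit row vectors `eᵢᵀ`, `i ∈ S`. -/
def sel {k : ℕ} (p : Fin k → Prop) : Matrix {i // p i} (Fin k) ℝ :=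
  Matrix.of fun i j => if (i : Fin k) = j then 1 else 0

/-- componentwise absolute value -/
def vabs {s : ℕ} (z : Fin s → ℝ) : Fin s → ℝ := fun i => |z i|

/-- Partial Jacobian with respect to the first argument. -/
def jac1 {n s m : ℕ} (c : (Fin n → ℝ) × (Fin s → ℝ) → Fin m → ℝ)
    (p : (Fin n → ℝ) × (Fin s → ℝ)) : Matrix (Fin m) (Fin n) ℝ :=
  Matrix.of fun i j => fderiv ℝ c p (Pi.single j 1, 0) i

/-- Partial Jacobian with respect to the second argument. -/
def jac2 {n s m : ℕ} (c : (Fin n → ℝ) × (Fin s → ℝ) → Fin m → ℝ)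
    (p : (Fin n → ℝ) × (Fin s → ℝ)) : Matrix (Fin m) (Fin s) ℝ :=
  Matrix.of fun i j => fderiv ℝ c p (0, Pi.single j 1) i

/-- `W = (I − ∂₂cZ Σ)⁻¹ ∂₁cZ`. -/
def Wmat {n s : ℕ} (cZ : (Fin n → ℝ) × (Fin s → ℝ) → Fin s → ℝ)
    (p : (Fin n → ℝ) × (Fin s → ℝ)) (σ : Fin s → ℝ) : Matrix (Fin s) (Fin n) ℝ :=
  (1 - jac2 cZ p * Matrix.diagonal σ)⁻¹ * jac1 cZ p

/-- The LIKQ Jacobian `[[∂₁cE + ∂₂cE Σ W], [P_A(∂₁cI + ∂₂cI Σ W)], [P_α W]]`. -/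
def likqJ {n s m₁ m₂ : ℕ}
    (cE : (Fin n → ℝ) × (Fin s → ℝ) → Fin m₁ → ℝ)
    (cI : (Fin n → ℝ) × (Fin s → ℝ) → Fin m₂ → ℝ)
    (cZ : (Fin n → ℝ) × (Fin s → ℝ) → Fin s → ℝ)
    (p : (Fin n → ℝ) × (Fin s → ℝ)) (σ : Fin s → ℝ)
    (Apred : Fin m₂ → Prop) (αpred : Fin s → Prop) :
    Matrix (Fin m₁ ⊕ ({j // Apred j} ⊕ {i // αpred i})) (Fin n) ℝ :=
  Matrix.fromRows
    (jac1 cE p + jac2 cE p * Matrix.diagonal σ * Wmat cZ p σ)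
    (Matrix.fromRows
      (sel Apred * (jac1 cI p + jac2 cI p * Matrix.diagonal σ * Wmat cZ p σ))
      (sel αpred * Wmat cZ p σ))

/-- The Lagrangian `(t,r) ↦ f(t) + λ_Eᵀ cE(t,r) − λ_Iᵀ cI(t,r) + λ_Zᵀ cZ(t,r)`. -/
def Lagr {n s m₁ m₂ : ℕ} (f : (Fin n → ℝ) → ℝ)
    (cE : (Fin n → ℝ) × (Fin s → ℝ) → Fin m₁ → ℝ)
    (cI : (Fin n → ℝ) × (Fin s → ℝ) → Fin m₂ → ℝ)
    (cZ : (Fin n → ℝ) × (Fin s → ℝ) → Fin s → ℝ)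
    (lE : Fin m₁ → ℝ) (lI : Fin m₂ → ℝ) (lZ : Fin s → ℝ) :
    (Fin n → ℝ) × (Fin s → ℝ) → ℝ := fun p =>
  f p.1 + lE ⬝ᵥ cE p - lI ⬝ᵥ cI p + lZ ⬝ᵥ cZ p

open Filter
open scoped Topology

/-!
Fix the sign pattern `σ = sign z*` and restrict to the branch where `z_α = 0`, so that
`|z| = Σ z` near `z*`. There the constraints become one smooth equation `G (t, z) = 0`
(equalities, active inequalities, `z_α = 0` and the switching equation `cZ (t, Σ z) = z`).
Eliminating the `z`-direction through the invertible matrix `I - ∂₂cZ Σ` turns the derivative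
of `G` at `(t*, z*)` into the LIKQ matrix `J`, so it is onto and `(d, W d)` is tangent whenever
`J d = 0`. The implicit function theorem then yields a `C²` curve `γ` of feasible points with
`γ'(0) = (d, W d)`, along which `f ∘ γ₁` has a local minimum at `0`.
Along `c = (γ₁, Σ γ₂)` the Lagrangian equals `f ∘ γ₁ + (Σ λ_Z)ᵀ c₂`, and kink stationarity makes
`(t*, |z*|)` a critical point of `L - (Σ λ_Z)ᵀ r` in all directions with `r_α = 0`, where `c`
stays. Hence `(f ∘ γ₁)''(0)` is the Hessian of `L` at `c'(0) = (d, Σ W d)`, which is therefore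
nonnegative.
-/

section Calculus

variable {E F : Type*} [NormedAddCommGroup E] [NormedSpace ℝ E]
  [NormedAddCommGroup F] [NormedSpace ℝ F]

theorem IsLocalMin.deriv_deriv_nonneg {h : ℝ → ℝ} {x : ℝ} (hmin : IsLocalMin h x)
    (hc : ContinuousAt h x) : 0 ≤ deriv (deriv h) x := by
  by_contra! hneg
  -- a strictly negative second derivative would make `x` also a local maximum
  have hconst : h =ᶠ[𝓝 x] fun _ => h x :=
    ((isLocalMax_of_deriv_deriv_neg hneg hmin.deriv_eq_zero hc).and hmin).mono
      fun y hy => le_antisymm hy.1 hy.2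
  have hderiv : deriv h =ᶠ[𝓝 x] fun _ => 0 := by simpa using hconst.deriv
  exact hneg.ne (by simpa using hderiv.deriv_eq)

theorem ContDiffAt.differentiableAt_deriv {c : ℝ → E} {x : ℝ} (hc : ContDiffAt ℝ 2 c x) :
    DifferentiableAt ℝ (deriv c) x := by
  have h : DifferentiableAt ℝ (fun τ => fderiv ℝ c τ 1) x :=
    ((hc.fderiv_right (m := 1) (by norm_num)).differentiableAt (by norm_num)).clm_apply
      (differentiableAt_const 1)
  simpa only [fderiv_apply_one_eq_deriv] using h

theorem hasDerivAt_deriv_comp {g : E → F} {c : ℝ → E} {x : ℝ}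
    (hg : ContDiffAt ℝ 2 g (c x)) (hc : ContDiffAt ℝ 2 c x) :
    HasDerivAt (deriv (g ∘ c))
      (fderiv ℝ (fderiv ℝ g) (c x) (deriv c x) (deriv c x) +
        fderiv ℝ g (c x) (deriv (deriv c) x)) x := by
  have hg' : ∀ᶠ τ in 𝓝 x, DifferentiableAt ℝ g (c τ) :=
    hc.continuousAt.eventually ((hg.eventually (by simp)).mono
      fun y hy => hy.differentiableAt (by norm_num))
  have hc' : ∀ᶠ τ in 𝓝 x, DifferentiableAt ℝ c τ :=
    (hc.eventually (by simp)).mono fun y hy => hy.differentiableAt (by norm_num)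
  have hchain : deriv (g ∘ c) =ᶠ[𝓝 x] fun τ => fderiv ℝ g (c τ) (deriv c τ) := by
    filter_upwards [hg', hc'] with τ hgτ hcτ
    exact fderiv_comp_deriv τ hgτ hcτ
  have hD2 : HasFDerivAt (fderiv ℝ g) (fderiv ℝ (fderiv ℝ g) (c x)) (c x) :=
    ((hg.fderiv_right (m := 1) (by norm_num)).differentiableAt (by norm_num)).hasFDerivAt
  refine HasDerivAt.congr_of_eventuallyEq ?_ hchain
  exact (hD2.comp_hasDerivAt x (hc.differentiableAt (by norm_num)).hasDerivAt).clm_apply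
    hc.differentiableAt_deriv.hasDerivAt

theorem IsLocalMin.fderiv_fderiv_nonneg_of_comp {g : E → ℝ} {c : ℝ → E} {x : ℝ}
    (hmin : IsLocalMin (g ∘ c) x) (hg : ContDiffAt ℝ 2 g (c x)) (hc : ContDiffAt ℝ 2 c x)
    (hcrit : fderiv ℝ g (c x) (deriv (deriv c) x) = 0) :
    0 ≤ fderiv ℝ (fderiv ℝ g) (c x) (deriv c x) (deriv c x) := by
  have h := hmin.deriv_deriv_nonneg (hg.continuousAt.comp hc.continuousAt)
  rwa [(hasDerivAt_deriv_comp hg hc).deriv, hcrit, add_zero] at h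

theorem fderiv_fderiv_sub_continuousLinearMap {g : E → F} {p : E} (ℓ : E →L[ℝ] F)
    (hg : ∀ᶠ q in 𝓝 p, DifferentiableAt ℝ g q) :
    fderiv ℝ (fderiv ℝ fun q => g q - ℓ q) p = fderiv ℝ (fderiv ℝ g) p := by
  have h : fderiv ℝ (fun q => g q - ℓ q) =ᶠ[𝓝 p] fun q => fderiv ℝ g q - ℓ :=
    hg.mono fun q hq => (hq.hasFDerivAt.sub ℓ.hasFDerivAt).fderiv
  rw [h.fderiv_eq, fderiv_sub_const]

theorem ContinuousLinearMap.apply_deriv_eq_zero {c : ℝ → E} (φ : E →L[ℝ] F)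
    (h : ∀ τ, φ (c τ) = 0) (τ : ℝ) : φ (deriv c τ) = 0 := by
  by_cases hc : DifferentiableAt ℝ c τ
  · rw [← (φ.hasFDerivAt.comp_hasDerivAt τ hc.hasDerivAt).deriv]
    simp [Function.comp_def, h]
  · rw [deriv_zero_of_not_differentiableAt hc, map_zero]

theorem ContDiffAt.exists_curve_mem_fiber [CompleteSpace E] [FiniteDimensional ℝ F]
    {G : E → F} {p : E} {k : WithTop ℕ∞} (hG : ContDiffAt ℝ k G p) (hk : k ≠ 0)
    (hsurj : Function.Surjective (fderiv ℝ G p)) {v : E} (hv : fderiv ℝ G p v = 0) :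
    ∃ γ : ℝ → E, γ 0 = p ∧ ContDiffAt ℝ k γ 0 ∧ HasDerivAt γ v 0 ∧
      ∀ᶠ τ in 𝓝 0, G (γ τ) = G p := by
  obtain ⟨R, hR⟩ := (fderiv ℝ G p).exists_rightInverse_of_surjective
    (LinearMap.range_eq_top.2 hsurj)
  -- with `R` a right inverse of `G' p`, solve `G (p + τ • v + R y) = G p` for `y = ψ τ`
  set A : ℝ × F →L[ℝ] E := (ContinuousLinearMap.smulRight (.id ℝ ℝ) v).coprod R
  have hA : ∀ τ y, A (τ, y) = τ • v + R y := fun _ _ => rfl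
  set H : ℝ × F → F := fun q => G (p + A q)
  have hpA : p + A 0 = p := by simp
  have hH : ContDiffAt ℝ k H 0 :=
    (hpA ▸ hG).comp 0 (contDiffAt_const.add A.contDiff.contDiffAt)
  have hH' : fderiv ℝ H 0 = (fderiv ℝ G p).comp A := by
    have hGd : HasFDerivAt G (fderiv ℝ G p) (p + A 0) := by
      rw [hpA]; exact (hG.differentiableAt hk).hasFDerivAt
    exact (hGd.comp 0 (A.hasFDerivAt.const_add p)).fderiv
  have hinv : (fderiv ℝ H 0 ∘L .inr ℝ ℝ F).IsInvertible := by
    have h : fderiv ℝ H 0 ∘L .inr ℝ ℝ F = .id ℝ F := by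
      ext1 y
      simpa [hH', hA] using congrArg (· y) hR
    exact h ▸ ⟨ContinuousLinearEquiv.refl ℝ F, rfl⟩
  set ψ := hH.implicitFunction hk hinv
  have hψ0 : ψ 0 = 0 := hH.implicitFunction_apply_self hk hinv
  have hψ' : HasDerivAt ψ 0 0 := by
    have h := (hH.hasStrictFDerivAt_implicitFunction hk hinv).hasFDerivAt.hasDerivAt
    have h0 : (fderiv ℝ H 0 ∘L .inl ℝ ℝ F) 1 = 0 := by simp [hH', hA, hv]
    simpa [h0] using h
  refine ⟨fun τ => p + A (τ, ψ τ), by simp [hψ0, hA], ?_, ?_, ?_⟩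
  · exact contDiffAt_const.add (A.contDiff.contDiffAt.comp 0
      (contDiffAt_id.prodMk (hH.contDiffAt_implicitFunction hk hinv)))
  · have h := (A.hasFDerivAt.comp_hasDerivAt (0 : ℝ)
      ((hasDerivAt_id (0 : ℝ)).prodMk hψ')).const_add p
    simpa [hA] using h
  · filter_upwards [hH.eventually_apply_implicitFunction hk hinv] with τ hτ
    simpa [H] using hτ

end Calculus

theorem Matrix.det_one_sub_eq_one_of_strictLower {ι R : Type*} [Fintype ι] [LinearOrder ι]
    [DecidableEq ι] [CommRing R] {N : Matrix ι ι R} (hN : ∀ i j, i ≤ j → N i j = 0) :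
    (1 - N).det = 1 := by
  rw [Matrix.det_of_isLowerTriangular]
  · simp [hN _ _ le_rfl]
  · intro i j (hij : i < j)
    simp [hij.ne, hN i j hij.le]

theorem Matrix.mulVec_surjective_of_rank_eq_card {ι κ K : Type*} [Fintype ι] [Fintype κ]
    [DecidableEq κ] [Field K] (M : Matrix ι κ K) (hM : M.rank = Fintype.card ι) :
    Function.Surjective M.mulVec := by
  have h : LinearMap.range M.mulVecLin = ⊤ := by
    apply Submodule.eq_top_of_finrank_eq
    rw [← Matrix.rank, hM, Module.finrank_pi]
  exact LinearMap.range_eq_top.1 h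

theorem Matrix.surjective_of_surjective_schur {ι κ μ R : Type*} [Fintype κ] [Fintype μ]
    [DecidableEq κ] [CommRing R] (K₁ : Matrix ι μ R) (K₂ : Matrix ι κ R) (C : Matrix κ μ R)
    {B : Matrix κ κ R} (hB : IsUnit B.det)
    (hJ : Function.Surjective (K₁ + K₂ * (B⁻¹ * C)).mulVec) :
    Function.Surjective fun v : (μ → R) × (κ → R) =>
      (K₁ *ᵥ v.1 + K₂ *ᵥ v.2, C *ᵥ v.1 - B *ᵥ v.2) := by
  rintro ⟨a, b⟩
  obtain ⟨w, hw⟩ := hJ (a + K₂ *ᵥ (B⁻¹ *ᵥ b))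
  refine ⟨(w, B⁻¹ *ᵥ (C *ᵥ w - b)), Prod.ext ?_ ?_⟩
  · rw [add_mulVec, ← mulVec_mulVec, ← mulVec_mulVec] at hw
    simp only [mulVec_sub]
    rw [← sub_eq_iff_eq_add.2 hw]
    abel
  · simp [mulVec_mulVec, mul_nonsing_inv _ hB]

theorem sel_mulVec {k : ℕ} (p : Fin k → Prop) (v : Fin k → ℝ) :
    sel p *ᵥ v = fun i : {i // p i} => v i := by
  ext i
  simp [sel, mulVec, dotProduct, ite_mul]

theorem sel_mul_mulVec {k l : ℕ} (p : Fin k → Prop) (N : Matrix (Fin k) (Fin l) ℝ)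
    (v : Fin l → ℝ) : (sel p * N) *ᵥ v = fun i : {i // p i} => (N *ᵥ v) i := by
  rw [← mulVec_mulVec, sel_mulVec]

theorem sel_mul {k l : ℕ} (p : Fin k → Prop) (N : Matrix (Fin k) (Fin l) ℝ) :
    sel p * N = N.submatrix Subtype.val id := by
  ext a j
  simp [sel, mul_apply]

theorem sel_transpose_mul_sel_mul {k l : ℕ} (p : Fin k → Prop) [Fintype {i // p i}]
    {N : Matrix (Fin k) (Fin l) ℝ} (hN : ∀ i, ¬ p i → ∀ j, N i j = 0) :
    (sel p)ᵀ * (sel p * N) = N := by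
  ext i j
  rw [sel_mul]
  simp only [sel, mul_apply, transpose_apply, of_apply, submatrix_apply, id_eq, ite_mul,
    one_mul, zero_mul]
  by_cases hi : p i
  · rw [Finset.sum_eq_single ⟨i, hi⟩ (fun b _ hb => if_neg fun h => hb (Subtype.ext h))
      (by simp)]
    simp
  · rw [hN i hi j]
    exact Finset.sum_eq_zero fun b _ => if_neg fun h : (b : Fin k) = i => hi (h ▸ b.2)

theorem jac1_mulVec {n s m : ℕ} (c : (Fin n → ℝ) × (Fin s → ℝ) → Fin m → ℝ)
    (p : (Fin n → ℝ) × (Fin s → ℝ)) (w : Fin n → ℝ) : jac1 c p *ᵥ w = fderiv ℝ c p (w, 0) := by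
  have h : jac1 c p = LinearMap.toMatrix'
      ((fderiv ℝ c p).comp (.inl ℝ _ _) : (Fin n → ℝ) →ₗ[ℝ] Fin m → ℝ) := by
    ext i j
    simp [jac1, LinearMap.toMatrix'_apply]
  rw [h, LinearMap.toMatrix'_mulVec]
  rfl

theorem jac2_mulVec {n s m : ℕ} (c : (Fin n → ℝ) × (Fin s → ℝ) → Fin m → ℝ)
    (p : (Fin n → ℝ) × (Fin s → ℝ)) (u : Fin s → ℝ) : jac2 c p *ᵥ u = fderiv ℝ c p (0, u) := by
  have h : jac2 c p = LinearMap.toMatrix'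
      ((fderiv ℝ c p).comp (.inr ℝ _ _) : (Fin s → ℝ) →ₗ[ℝ] Fin m → ℝ) := by
    ext i j
    simp [jac2, LinearMap.toMatrix'_apply]
  rw [h, LinearMap.toMatrix'_mulVec]
  rfl

theorem fderiv_apply_eq_jac {n s m : ℕ} (c : (Fin n → ℝ) × (Fin s → ℝ) → Fin m → ℝ)
    (p : (Fin n → ℝ) × (Fin s → ℝ)) (w : Fin n → ℝ) (u : Fin s → ℝ) :
    fderiv ℝ c p (w, u) = jac1 c p *ᵥ w + jac2 c p *ᵥ u := by
  rw [jac1_mulVec, jac2_mulVec, ← map_add, Prod.mk_add_mk, add_zero, zero_add]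

theorem ContinuousLinearMap.apply_eq_dotProduct {k : ℕ} (T : (Fin k → ℝ) →L[ℝ] ℝ)
    (w : Fin k → ℝ) : T w = (fun j => T (Pi.single j 1)) ⬝ᵥ w := by
  conv_lhs => rw [← Finset.univ_sum_single w]
  simp only [map_sum, dotProduct]
  refine Finset.sum_congr rfl fun j _ => ?_
  rw [show Pi.single j (w j) = w j • Pi.single j (1 : ℝ) by
    rw [← Pi.single_smul', smul_eq_mul, mul_one], map_smul, smul_eq_mul, mul_comm]

section DotProduct

variable {E ι : Type*} [NormedAddCommGroup E] [NormedSpace ℝ E] [Fintype ι] {c : E → ι → ℝ}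
  {x : E} (l : ι → ℝ)

theorem HasFDerivAt.const_dotProduct {c' : E →L[ℝ] ι → ℝ} (hc : HasFDerivAt c c' x) :
    HasFDerivAt (fun y => l ⬝ᵥ c y)
      ((LinearMap.toContinuousLinearMap (dotProductBilin ℝ ℝ l)).comp c') x :=
  (LinearMap.toContinuousLinearMap (dotProductBilin ℝ ℝ l)).hasFDerivAt.comp x hc

theorem ContDiffAt.const_dotProduct {k : WithTop ℕ∞} (hc : ContDiffAt ℝ k c x) :
    ContDiffAt ℝ k (fun y => l ⬝ᵥ c y) x :=
  (LinearMap.toContinuousLinearMap (dotProductBilin ℝ ℝ l)).contDiff.contDiffAt.comp x hc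

end DotProduct

theorem fderiv_fderiv_nonneg_of_isLocalMin_sub_dotProduct {n s : ℕ}
    {L : (Fin n → ℝ) × (Fin s → ℝ) → ℝ} {v : Fin s → ℝ} {α : Fin s → Prop}
    {c : ℝ → (Fin n → ℝ) × (Fin s → ℝ)} (hL : ContDiffAt ℝ 2 L (c 0)) (hc : ContDiffAt ℝ 2 c 0)
    (hcα : ∀ τ i, α i → (c τ).2 i = 0)
    (hcrit : ∀ w u, (∀ i, α i → u i = 0) → fderiv ℝ L (c 0) (w, u) = v ⬝ᵥ u)
    (hmin : IsLocalMin (fun τ => L (c τ) - v ⬝ᵥ (c τ).2) 0) :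
    0 ≤ fderiv ℝ (fderiv ℝ L) (c 0) (deriv c 0) (deriv c 0) := by
  set ℓ := (LinearMap.toContinuousLinearMap (dotProductBilin ℝ ℝ v)).comp
    (ContinuousLinearMap.snd ℝ (Fin n → ℝ) (Fin s → ℝ))
  have hL' : ∀ᶠ q in 𝓝 (c 0), DifferentiableAt ℝ L q :=
    (hL.eventually (by simp)).mono fun q hq => hq.differentiableAt two_ne_zero
  have hc'' : ∀ i, α i → (deriv (deriv c) 0).2 i = 0 := fun i hi =>
    let π := (ContinuousLinearMap.proj (R := ℝ) (φ := fun _ : Fin s => ℝ) i).comp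
      (ContinuousLinearMap.snd ℝ (Fin n → ℝ) (Fin s → ℝ))
    π.apply_deriv_eq_zero (π.apply_deriv_eq_zero fun τ => hcα τ i hi) 0
  have hcrit' : fderiv ℝ (fun q => L q - ℓ q) (c 0) (deriv (deriv c) 0) = 0 := by
    have h : HasFDerivAt (fun q => L q - ℓ q) (fderiv ℝ L (c 0) - ℓ) (c 0) :=
      hL'.self_of_nhds.hasFDerivAt.sub ℓ.hasFDerivAt
    rw [h.fderiv]
    have h' := hcrit (deriv (deriv c) 0).1 _ hc''
    rw [Prod.mk.eta] at h'
    simpa [ℓ, sub_eq_zero] using h'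
  have h := IsLocalMin.fderiv_fderiv_nonneg_of_comp (g := fun q => L q - ℓ q) hmin
    (hL.sub ℓ.contDiff.contDiffAt) hc hcrit'
  rwa [fderiv_fderiv_sub_continuousLinearMap ℓ hL'] at h

section Lagrangian

variable {n s m₁ m₂ : ℕ} (f : (Fin n → ℝ) → ℝ)
  (cE : (Fin n → ℝ) × (Fin s → ℝ) → Fin m₁ → ℝ)
  (cI : (Fin n → ℝ) × (Fin s → ℝ) → Fin m₂ → ℝ)
  (cZ : (Fin n → ℝ) × (Fin s → ℝ) → Fin s → ℝ)
  (lE : Fin m₁ → ℝ) (lI : Fin m₂ → ℝ) (lZ : Fin s → ℝ) {p : (Fin n → ℝ) × (Fin s → ℝ)}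

theorem contDiffAt_lagr {k : WithTop ℕ∞} (hf : ContDiffAt ℝ k f p.1)
    (hE : ContDiffAt ℝ k cE p) (hI : ContDiffAt ℝ k cI p) (hZ : ContDiffAt ℝ k cZ p) :
    ContDiffAt ℝ k (Lagr f cE cI cZ lE lI lZ) p :=
  (((hf.comp p contDiffAt_fst).add (hE.const_dotProduct lE)).sub
    (hI.const_dotProduct lI)).add (hZ.const_dotProduct lZ)

theorem fderiv_lagr_apply (hf : DifferentiableAt ℝ f p.1) (hE : DifferentiableAt ℝ cE p)
    (hI : DifferentiableAt ℝ cI p) (hZ : DifferentiableAt ℝ cZ p)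
    (w : Fin n → ℝ) (u : Fin s → ℝ) :
    fderiv ℝ (Lagr f cE cI cZ lE lI lZ) p (w, u) =
      ((fun j => fderiv ℝ f p.1 (Pi.single j 1)) + (jac1 cE p)ᵀ *ᵥ lE -
        (jac1 cI p)ᵀ *ᵥ lI + (jac1 cZ p)ᵀ *ᵥ lZ) ⬝ᵥ w +
      ((jac2 cE p)ᵀ *ᵥ lE - (jac2 cI p)ᵀ *ᵥ lI + (jac2 cZ p)ᵀ *ᵥ lZ) ⬝ᵥ u := by
  have h : HasFDerivAt (Lagr f cE cI cZ lE lI lZ) _ p :=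
    (((hf.hasFDerivAt.comp p hasFDerivAt_fst).add (hE.hasFDerivAt.const_dotProduct lE)).sub
      (hI.hasFDerivAt.const_dotProduct lI)).add (hZ.hasFDerivAt.const_dotProduct lZ)
  rw [h.fderiv]
  simp only [_root_.add_apply, _root_.sub_apply, ContinuousLinearMap.comp_apply,
    LinearMap.coe_toContinuousLinearMap', dotProductBilin_apply_apply, fderiv_apply_eq_jac,
    ContinuousLinearMap.coe_fst', mulVec_transpose, dotProduct_add,
    dotProduct_mulVec, add_dotProduct, sub_dotProduct]
  rw [ContinuousLinearMap.apply_eq_dotProduct (fderiv ℝ f p.1) w]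
  ring

theorem fderiv_lagr_apply_of_kinkStationary {α : Fin s → Prop} {σ : Fin s → ℝ}
    (hf : DifferentiableAt ℝ f p.1) (hE : DifferentiableAt ℝ cE p)
    (hI : DifferentiableAt ℝ cI p) (hZ : DifferentiableAt ℝ cZ p)
    (hstat : (fun j => fderiv ℝ f p.1 (Pi.single j 1)) + (jac1 cE p)ᵀ *ᵥ lE -
      (jac1 cI p)ᵀ *ᵥ lI + (jac1 cZ p)ᵀ *ᵥ lZ = 0)
    (hsig : ∀ i, ¬ α i →
      ((jac2 cE p)ᵀ *ᵥ lE - (jac2 cI p)ᵀ *ᵥ lI + (jac2 cZ p)ᵀ *ᵥ lZ) i = σ i * lZ i)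
    (w : Fin n → ℝ) {u : Fin s → ℝ} (hu : ∀ i, α i → u i = 0) :
    fderiv ℝ (Lagr f cE cI cZ lE lI lZ) p (w, u) = (diagonal σ *ᵥ lZ) ⬝ᵥ u := by
  rw [fderiv_lagr_apply f cE cI cZ lE lI lZ hf hE hI hZ, hstat, zero_dotProduct, zero_add]
  refine Finset.sum_congr rfl fun i _ => ?_
  by_cases hi : α i
  · simp [hu i hi]
  · rw [hsig i hi, mulVec_diagonal]

end Lagrangian

section Branch

variable {n s m₁ m₂ : ℕ}
  (cE : (Fin n → ℝ) × (Fin s → ℝ) → Fin m₁ → ℝ)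
  (cI : (Fin n → ℝ) × (Fin s → ℝ) → Fin m₂ → ℝ)
  (cZ : (Fin n → ℝ) × (Fin s → ℝ) → Fin s → ℝ)
  (σ : Fin s → ℝ) (A : Fin m₂ → Prop) (α : Fin s → Prop)

def scaleSnd : (Fin n → ℝ) × (Fin s → ℝ) →L[ℝ] (Fin n → ℝ) × (Fin s → ℝ) :=
  (ContinuousLinearMap.id ℝ _).prodMap (LinearMap.toContinuousLinearMap (diagonal σ).mulVecLin)

@[simp]
theorem scaleSnd_apply (x : (Fin n → ℝ) × (Fin s → ℝ)) :
    scaleSnd σ x = (x.1, diagonal σ *ᵥ x.2) :=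
  rfl

/-- The constraint map `G` on the branch with signs `σ`, active inequalities `A` and kinks `α`. -/
def branchMap (x : (Fin n → ℝ) × (Fin s → ℝ)) :
    (Fin m₁ ⊕ ({j // A j} ⊕ {i // α i}) → ℝ) × (Fin s → ℝ) :=
  (Sum.elim (cE (scaleSnd σ x)) (Sum.elim (fun j => cI (scaleSnd σ x) j) (fun i => x.2 i)),
    cZ (scaleSnd σ x) - x.2)

theorem branchMap_eq_zero_iff {x : (Fin n → ℝ) × (Fin s → ℝ)} :
    branchMap cE cI cZ σ A α x = 0 ↔
      cE (scaleSnd σ x) = 0 ∧ (∀ j, A j → cI (scaleSnd σ x) j = 0) ∧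
        (∀ i, α i → x.2 i = 0) ∧ cZ (scaleSnd σ x) = x.2 := by
  simp only [branchMap, Prod.ext_iff, funext_iff, Sum.forall, Sum.elim_inl, Sum.elim_inr,
    Prod.fst_zero, Prod.snd_zero, Pi.zero_apply, sub_eq_zero, Subtype.forall, and_assoc]

-- the partial Jacobians of the first component of `branchMap` in `t` and in `z`
def branchJacT (p : (Fin n → ℝ) × (Fin s → ℝ)) :
    Matrix (Fin m₁ ⊕ ({j // A j} ⊕ {i // α i})) (Fin n) ℝ :=
  fromRows (jac1 cE p) (fromRows (sel A * jac1 cI p) 0)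

def branchJacZ (p : (Fin n → ℝ) × (Fin s → ℝ)) :
    Matrix (Fin m₁ ⊕ ({j // A j} ⊕ {i // α i})) (Fin s) ℝ :=
  fromRows (jac2 cE p * diagonal σ) (fromRows (sel A * (jac2 cI p * diagonal σ)) (sel α))

theorem likqJ_eq (p : (Fin n → ℝ) × (Fin s → ℝ)) :
    likqJ cE cI cZ p σ A α = branchJacT cE cI A α p + branchJacZ cE cI σ A α p * Wmat cZ p σ := by
  ext (i | j | i) k <;>
    simp [likqJ, branchJacT, branchJacZ, fromRows_mul, Matrix.mul_add, Matrix.mul_assoc]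

theorem contDiffAt_branchMap {x : (Fin n → ℝ) × (Fin s → ℝ)} {k : WithTop ℕ∞}
    (hE : ContDiffAt ℝ k cE (scaleSnd σ x)) (hI : ContDiffAt ℝ k cI (scaleSnd σ x))
    (hZ : ContDiffAt ℝ k cZ (scaleSnd σ x)) : ContDiffAt ℝ k (branchMap cE cI cZ σ A α) x := by
  have hS : ContDiffAt ℝ k (scaleSnd (n := n) σ) x := (scaleSnd σ).contDiff.contDiffAt
  refine ContDiffAt.prodMk (contDiffAt_pi.2 ?_) ((hZ.comp x hS).sub contDiffAt_snd)
  rintro (i | j | i)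
  · exact contDiffAt_pi.1 (hE.comp x hS) i
  · exact contDiffAt_pi.1 (hI.comp x hS) j
  · exact ((ContinuousLinearMap.proj (i : Fin s)).comp
      (ContinuousLinearMap.snd ℝ (Fin n → ℝ) (Fin s → ℝ))).contDiff.contDiffAt

theorem fderiv_branchMap_apply {x : (Fin n → ℝ) × (Fin s → ℝ)}
    (hE : DifferentiableAt ℝ cE (scaleSnd σ x)) (hI : DifferentiableAt ℝ cI (scaleSnd σ x))
    (hZ : DifferentiableAt ℝ cZ (scaleSnd σ x)) (v : (Fin n → ℝ) × (Fin s → ℝ)) :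
    fderiv ℝ (branchMap cE cI cZ σ A α) x v =
      (branchJacT cE cI A α (scaleSnd σ x) *ᵥ v.1 + branchJacZ cE cI σ A α (scaleSnd σ x) *ᵥ v.2,
        jac1 cZ (scaleSnd σ x) *ᵥ v.1 - (1 - jac2 cZ (scaleSnd σ x) * diagonal σ) *ᵥ v.2) := by
  set S := scaleSnd (n := n) σ
  have hS := S.hasFDerivAt (x := x)
  have h : HasFDerivAt (branchMap cE cI cZ σ A α)
      ((ContinuousLinearMap.pi (Sum.elim
        (fun i => (ContinuousLinearMap.proj i).comp ((fderiv ℝ cE (S x)).comp S))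
        (Sum.elim
          (fun j : {j // A j} => (ContinuousLinearMap.proj (j : Fin m₂)).comp
            ((fderiv ℝ cI (S x)).comp S))
          (fun i : {i // α i} => (ContinuousLinearMap.proj (i : Fin s)).comp
            (ContinuousLinearMap.snd ℝ (Fin n → ℝ) (Fin s → ℝ)))))).prod
        ((fderiv ℝ cZ (S x)).comp S - ContinuousLinearMap.snd ℝ (Fin n → ℝ) (Fin s → ℝ))) x := by
    refine HasFDerivAt.prodMk (hasFDerivAt_pi.2 ?_)
      ((hZ.hasFDerivAt.comp x hS).sub hasFDerivAt_snd)
    rintro (i | j | i)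
    · exact (hasFDerivAt_apply i _).comp x (hE.hasFDerivAt.comp x hS)
    · exact (hasFDerivAt_apply (j : Fin m₂) _).comp x (hI.hasFDerivAt.comp x hS)
    · exact ((ContinuousLinearMap.proj (i : Fin s)).comp
        (ContinuousLinearMap.snd ℝ (Fin n → ℝ) (Fin s → ℝ))).hasFDerivAt
  rw [h.fderiv]
  obtain ⟨w, y⟩ := v
  refine Prod.ext ?_ ?_
  · ext (i | j | i) <;>
      simp [S, branchJacT, branchJacZ, fderiv_apply_eq_jac, sel_mulVec, sel_mul_mulVec,
        mulVec_mulVec]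
  · simp [S, fderiv_apply_eq_jac, sub_mulVec, mulVec_mulVec]
    abel

theorem surjective_fderiv_branchMap {x : (Fin n → ℝ) × (Fin s → ℝ)}
    (hE : DifferentiableAt ℝ cE (scaleSnd σ x)) (hI : DifferentiableAt ℝ cI (scaleSnd σ x))
    (hZ : DifferentiableAt ℝ cZ (scaleSnd σ x))
    (hB : IsUnit (1 - jac2 cZ (scaleSnd σ x) * diagonal σ).det)
    (hJ : Function.Surjective (likqJ cE cI cZ (scaleSnd σ x) σ A α).mulVec) :
    Function.Surjective (fderiv ℝ (branchMap cE cI cZ σ A α) x) := by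
  rw [likqJ_eq, Wmat] at hJ
  convert Matrix.surjective_of_surjective_schur _ _ _ hB hJ using 1
  exact funext (fderiv_branchMap_apply cE cI cZ σ A α hE hI hZ)

theorem fderiv_branchMap_apply_eq_zero {x : (Fin n → ℝ) × (Fin s → ℝ)}
    (hE : DifferentiableAt ℝ cE (scaleSnd σ x)) (hI : DifferentiableAt ℝ cI (scaleSnd σ x))
    (hZ : DifferentiableAt ℝ cZ (scaleSnd σ x))
    (hB : IsUnit (1 - jac2 cZ (scaleSnd σ x) * diagonal σ).det) {d : Fin n → ℝ}
    (hd : likqJ cE cI cZ (scaleSnd σ x) σ A α *ᵥ d = 0) :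
    fderiv ℝ (branchMap cE cI cZ σ A α) x (d, Wmat cZ (scaleSnd σ x) σ *ᵥ d) = 0 := by
  rw [likqJ_eq, add_mulVec, ← mulVec_mulVec] at hd
  rw [fderiv_branchMap_apply cE cI cZ σ A α hE hI hZ, hd, Wmat, mulVec_mulVec,
    ← Matrix.mul_assoc, mul_nonsing_inv _ hB, Matrix.one_mul, sub_self, Prod.mk_zero_zero]

theorem exists_curve_branchMap_eq_zero {x p : (Fin n → ℝ) × (Fin s → ℝ)}
    (hp : scaleSnd σ x = p) (hE : ContDiffAt ℝ 2 cE p) (hI : ContDiffAt ℝ 2 cI p)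
    (hZ : ContDiffAt ℝ 2 cZ p)
    (hlow : ∀ i j, i ≤ j → jac2 cZ p i j = 0)
    (hJ : Function.Surjective (likqJ cE cI cZ p σ A α).mulVec)
    (hfeasE : cE p = 0) (hA : ∀ j, A j → cI p j = 0) (hα : ∀ i, α i → x.2 i = 0)
    (hfeasZ : cZ p = x.2) {d : Fin n → ℝ} (hd : likqJ cE cI cZ p σ A α *ᵥ d = 0) :
    ∃ γ : ℝ → (Fin n → ℝ) × (Fin s → ℝ), γ 0 = x ∧ ContDiffAt ℝ 2 γ 0 ∧
      HasDerivAt γ (d, Wmat cZ p σ *ᵥ d) 0 ∧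
      ∀ᶠ τ in 𝓝 0, branchMap cE cI cZ σ A α (γ τ) = 0 := by
  subst hp
  have h2 : (2 : WithTop ℕ∞) ≠ 0 := two_ne_zero
  have hB : IsUnit (1 - jac2 cZ (scaleSnd σ x) * diagonal σ).det := by
    rw [Matrix.det_one_sub_eq_one_of_strictLower fun i j hij => by
      rw [mul_diagonal, hlow i j hij, zero_mul]]
    exact isUnit_one
  have hsurj := surjective_fderiv_branchMap cE cI cZ σ A α (hE.differentiableAt h2)
    (hI.differentiableAt h2) (hZ.differentiableAt h2) hB hJ
  have hker := fderiv_branchMap_apply_eq_zero cE cI cZ σ A α (hE.differentiableAt h2)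
    (hI.differentiableAt h2) (hZ.differentiableAt h2) hB hd
  have hx : branchMap cE cI cZ σ A α x = 0 :=
    (branchMap_eq_zero_iff cE cI cZ σ A α).2 ⟨hfeasE, hA, hα, hfeasZ⟩
  rw [← hx]
  exact (contDiffAt_branchMap cE cI cZ σ A α hE hI hZ).exists_curve_mem_fiber h2 hsurj hker

theorem lagr_scaleSnd_of_branchMap_eq_zero (f : (Fin n → ℝ) → ℝ)
    (lE : Fin m₁ → ℝ) (lI : Fin m₂ → ℝ) (lZ : Fin s → ℝ) {x : (Fin n → ℝ) × (Fin s → ℝ)}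
    (hx : branchMap cE cI cZ σ A α x = 0) (hlI : ∀ j, ¬ A j → lI j = 0)
    (hσ : ∀ i, ¬ α i → σ i * σ i = 1) :
    Lagr f cE cI cZ lE lI lZ (scaleSnd σ x) = f x.1 + (diagonal σ *ᵥ lZ) ⬝ᵥ (scaleSnd σ x).2 := by
  obtain ⟨hE, hI, hα, hZ⟩ := (branchMap_eq_zero_iff cE cI cZ σ A α).1 hx
  have hlIcI : lI ⬝ᵥ cI (scaleSnd σ x) = 0 := Finset.sum_eq_zero fun j _ => by
    by_cases hj : A j
    · rw [hI j hj, mul_zero]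
    · rw [hlI j hj, zero_mul]
  have hlZ : lZ ⬝ᵥ x.2 = (diagonal σ *ᵥ lZ) ⬝ᵥ (scaleSnd σ x).2 :=
    Finset.sum_congr rfl fun i _ => by
      simp only [scaleSnd_apply, mulVec_diagonal]
      by_cases hi : α i
      · simp [hα i hi]
      · linear_combination (-(lZ i * x.2 i)) * hσ i hi
  simp only [Lagr, hE, hlIcI, hZ, hlZ, dotProduct_zero, add_zero, sub_zero]
  rfl

theorem lagr_hessian_nonneg_of_branch_curve (f : (Fin n → ℝ) → ℝ)
    (lE : Fin m₁ → ℝ) (lI : Fin m₂ → ℝ) (lZ : Fin s → ℝ) {γ : ℝ → (Fin n → ℝ) × (Fin s → ℝ)}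
    {v p : (Fin n → ℝ) × (Fin s → ℝ)} (hp : scaleSnd σ (γ 0) = p) (hγ : ContDiffAt ℝ 2 γ 0)
    (hγ' : HasDerivAt γ v 0) (hf : ContDiffAt ℝ 2 f p.1) (hE : ContDiffAt ℝ 2 cE p)
    (hI : ContDiffAt ℝ 2 cI p) (hZ : ContDiffAt ℝ 2 cZ p)
    (hσα : ∀ i, α i → σ i = 0) (hσ : ∀ i, ¬ α i → σ i * σ i = 1) (hlI : ∀ j, ¬ A j → lI j = 0)
    (hstat : (fun j => fderiv ℝ f p.1 (Pi.single j 1)) + (jac1 cE p)ᵀ *ᵥ lE -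
      (jac1 cI p)ᵀ *ᵥ lI + (jac1 cZ p)ᵀ *ᵥ lZ = 0)
    (hsig : ∀ i, ¬ α i →
      ((jac2 cE p)ᵀ *ᵥ lE - (jac2 cI p)ᵀ *ᵥ lI + (jac2 cZ p)ᵀ *ᵥ lZ) i = σ i * lZ i)
    (hmin : IsLocalMin (fun τ => f (γ τ).1) 0)
    (hG : ∀ᶠ τ in 𝓝 0, branchMap cE cI cZ σ A α (γ τ) = 0) :
    0 ≤ fderiv ℝ (fderiv ℝ (Lagr f cE cI cZ lE lI lZ)) p (scaleSnd σ v) (scaleSnd σ v) := by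
  subst hp
  have h2 : (2 : WithTop ℕ∞) ≠ 0 := two_ne_zero
  have h := fderiv_fderiv_nonneg_of_isLocalMin_sub_dotProduct (c := fun τ => scaleSnd σ (γ τ))
    (v := diagonal σ *ᵥ lZ) (α := α) (contDiffAt_lagr f cE cI cZ lE lI lZ hf hE hI hZ)
    ((scaleSnd σ).contDiff.contDiffAt.comp 0 hγ)
    (fun τ i hi => by simp [mulVec_diagonal, hσα i hi])
    (fun w u hu => fderiv_lagr_apply_of_kinkStationary f cE cI cZ lE lI lZ
      (hf.differentiableAt h2) (hE.differentiableAt h2) (hI.differentiableAt h2)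
      (hZ.differentiableAt h2) hstat hsig w hu)
    (hmin.congr (by
      filter_upwards [hG] with τ hτ
      rw [lagr_scaleSnd_of_branchMap_eq_zero cE cI cZ σ A α f lE lI lZ hτ hlI hσ]
      ring))
  have hc' : HasDerivAt (fun τ => scaleSnd σ (γ τ)) (scaleSnd σ v) 0 :=
    (scaleSnd σ).hasFDerivAt.comp_hasDerivAt 0 hγ'
  rwa [hc'.deriv] at h

end Branch

theorem Real.eventually_sign_mul_eq_abs {r : ℝ} (hr : r ≠ 0) :
    ∀ᶠ y in 𝓝 r, Real.sign r * y = |y| := by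
  rcases hr.lt_or_gt with hr | hr
  · filter_upwards [eventually_lt_nhds hr] with y hy
    rw [Real.sign_of_neg hr, abs_of_neg hy, neg_one_mul]
  · filter_upwards [eventually_gt_nhds hr] with y hy
    rw [Real.sign_of_pos hr, abs_of_pos hy, one_mul]

theorem Real.sign_mul_self_eq_abs (r : ℝ) : Real.sign r * r = |r| := by
  rcases eq_or_ne r 0 with rfl | hr
  · simp
  · exact (Real.eventually_sign_mul_eq_abs hr).self_of_nhds

theorem Real.sign_mul_sign_of_ne_zero {r : ℝ} (hr : r ≠ 0) : Real.sign r * Real.sign r = 1 := by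
  rcases Real.sign_apply_eq_of_ne_zero r hr with h | h <;> simp [h]

theorem scaleSnd_sign_self {n s : ℕ} (t : Fin n → ℝ) (z : Fin s → ℝ) :
    scaleSnd (fun i => Real.sign (z i)) (t, z) = (t, vabs z) := by
  ext i <;> simp [mulVec_diagonal, vabs, Real.sign_mul_self_eq_abs]

theorem eventually_scaleSnd_sign_eq {n s : ℕ} (t₀ : Fin n → ℝ) (z₀ : Fin s → ℝ) :
    ∀ᶠ x in 𝓝 (t₀, z₀), (∀ i, z₀ i = 0 → x.2 i = 0) →
      scaleSnd (fun i => Real.sign (z₀ i)) x = (x.1, vabs x.2) := by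
  have h : ∀ᶠ z in 𝓝 z₀, ∀ i, z₀ i ≠ 0 → Real.sign (z₀ i) * z i = |z i| :=
    eventually_all.2 fun i => eventually_imp_distrib_left.2 fun hi =>
      (continuous_apply i).continuousAt.eventually (Real.eventually_sign_mul_eq_abs hi)
  filter_upwards [continuous_snd.continuousAt.eventually h] with x hx h0
  ext i
  · rfl
  · by_cases hi : z₀ i = 0
    · simp [mulVec_diagonal, vabs, hi, h0 i hi]
    · simp [mulVec_diagonal, vabs, hx i hi]

theorem sel_transpose_mul_sel_mul_diagonal_sign {s l : ℕ} (z : Fin s → ℝ)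
    [Fintype {i // z i ≠ 0}] (N : Matrix (Fin s) (Fin l) ℝ) :
    (sel fun i => z i ≠ 0)ᵀ *
        ((sel fun i => z i ≠ 0) * (diagonal (fun i => Real.sign (z i)) * N)) =
      diagonal (fun i => Real.sign (z i)) * N :=
  sel_transpose_mul_sel_mul _ fun i hi j => by simp [diagonal_mul, not_not.1 hi]

theorem eq_zero_of_dotProduct_eq_zero_of_nonneg {ι : Type*} [Fintype ι] {a b : ι → ℝ}
    (ha : 0 ≤ a) (hb : 0 ≤ b) (hab : a ⬝ᵥ b = 0) {j : ι} (hj : b j ≠ 0) : a j = 0 :=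
  (mul_eq_zero.1 ((Finset.sum_eq_zero_iff_of_nonneg fun i _ => mul_nonneg (ha i) (hb i)).1 hab j
    (Finset.mem_univ j))).resolve_right hj

theorem eventually_mem_feasible_of_branchMap_eq_zero {n s m₁ m₂ : ℕ}
    {cE : (Fin n → ℝ) × (Fin s → ℝ) → Fin m₁ → ℝ} {cI : (Fin n → ℝ) × (Fin s → ℝ) → Fin m₂ → ℝ}
    {cZ : (Fin n → ℝ) × (Fin s → ℝ) → Fin s → ℝ} {Dt : Set (Fin n → ℝ)} {Dz : Set (Fin s → ℝ)}
    (hDt : IsOpen Dt) (hDz : IsOpen Dz) {tstar : Fin n → ℝ} {zstar : Fin s → ℝ}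
    (ht : tstar ∈ Dt) (hz : zstar ∈ Dz) (hcI : ContinuousAt cI (tstar, vabs zstar))
    (hfeasI : ∀ j, 0 ≤ cI (tstar, vabs zstar) j) :
    ∀ᶠ x in 𝓝 (tstar, zstar),
      branchMap cE cI cZ (fun i => Real.sign (zstar i)) (fun j => cI (tstar, vabs zstar) j = 0)
        (fun i => zstar i = 0) x = 0 →
      x ∈ {q : (Fin n → ℝ) × (Fin s → ℝ) | q.1 ∈ Dt ∧ q.2 ∈ Dz ∧ cE (q.1, vabs q.2) = 0 ∧
        (∀ j, 0 ≤ cI (q.1, vabs q.2) j) ∧ cZ (q.1, vabs q.2) = q.2} := by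
  set σ : Fin s → ℝ := fun i => Real.sign (zstar i)
  have hcIS : ContinuousAt (fun x => cI (scaleSnd σ x)) (tstar, zstar) := by
    refine ContinuousAt.comp ?_ (scaleSnd σ).continuous.continuousAt
    rwa [scaleSnd_sign_self]
  have hpos : ∀ᶠ x in 𝓝 (tstar, zstar),
      ∀ j, cI (tstar, vabs zstar) j ≠ 0 → 0 < cI (scaleSnd σ x) j :=
    eventually_all.2 fun j => eventually_imp_distrib_left.2 fun hj => by
      have hval : cI (scaleSnd σ (tstar, zstar)) j = cI (tstar, vabs zstar) j := by
        rw [scaleSnd_sign_self]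
      exact ((continuous_apply j).continuousAt.comp hcIS).eventually
        (lt_mem_nhds (show 0 < cI (scaleSnd σ (tstar, zstar)) j from
          hval ▸ (hfeasI j).lt_of_ne' hj))
  filter_upwards [eventually_scaleSnd_sign_eq tstar zstar, hpos,
    (hDt.prod hDz).mem_nhds (Set.mk_mem_prod ht hz)] with x hxS hxpos hxD hx
  obtain ⟨hE, hI, hα, hZ⟩ := (branchMap_eq_zero_iff cE cI cZ σ _ _).1 hx
  rw [hxS hα] at hE hI hZ hxpos
  refine ⟨hxD.1, hxD.2, hE, fun j => ?_, hZ⟩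
  rcases eq_or_ne (cI (tstar, vabs zstar) j) 0 with hj | hj
  · exact (hI j hj).ge
  · exact (hxpos j hj).le

theorem isLocalMin_of_branchMap_eq_zero {n s m₁ m₂ : ℕ} {f : (Fin n → ℝ) → ℝ}
    {cE : (Fin n → ℝ) × (Fin s → ℝ) → Fin m₁ → ℝ} {cI : (Fin n → ℝ) × (Fin s → ℝ) → Fin m₂ → ℝ}
    {cZ : (Fin n → ℝ) × (Fin s → ℝ) → Fin s → ℝ} {Dt : Set (Fin n → ℝ)} {Dz : Set (Fin s → ℝ)}
    (hDt : IsOpen Dt) (hDz : IsOpen Dz) {tstar : Fin n → ℝ} {zstar : Fin s → ℝ}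
    (ht : tstar ∈ Dt) (hz : zstar ∈ Dz) (hcI : ContinuousAt cI (tstar, vabs zstar))
    (hfeasI : ∀ j, 0 ≤ cI (tstar, vabs zstar) j)
    (hmin : IsLocalMinOn (fun q : (Fin n → ℝ) × (Fin s → ℝ) => f q.1)
      {q | q.1 ∈ Dt ∧ q.2 ∈ Dz ∧ cE (q.1, vabs q.2) = 0 ∧
        (∀ j, 0 ≤ cI (q.1, vabs q.2) j) ∧ cZ (q.1, vabs q.2) = q.2}
      (tstar, zstar))
    {γ : ℝ → (Fin n → ℝ) × (Fin s → ℝ)} (hγ0 : γ 0 = (tstar, zstar)) (hγ : ContinuousAt γ 0)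
    (hG : ∀ᶠ τ in 𝓝 0, branchMap cE cI cZ (fun i => Real.sign (zstar i))
      (fun j => cI (tstar, vabs zstar) j = 0) (fun i => zstar i = 0) (γ τ) = 0) :
    IsLocalMin (fun τ => f (γ τ).1) 0 := by
  refine (hγ0 ▸ hmin : IsLocalMinOn _ _ (γ 0)).comp_tendsto
    (tendsto_nhdsWithin_iff.2 ⟨hγ.tendsto, ?_⟩)
  filter_upwards [(hγ0 ▸ hγ.tendsto : Tendsto γ _ (𝓝 (tstar, zstar))).eventually
    (eventually_mem_feasible_of_branchMap_eq_zero hDt hDz ht hz hcI hfeasI), hG]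
    with τ hτ hτG using hτ hτG

theorem stmt16_general {n s m₁ m₂ : ℕ}
    (Dt : Set (Fin n → ℝ)) (Dz : Set (Fin s → ℝ))
    (hDt : IsOpen Dt) (hDz : IsOpen Dz)
    (hsym : ∀ z ∈ Dz, ∀ σ : Fin s → ℝ, (∀ i, σ i = -1 ∨ σ i = 0 ∨ σ i = 1) →
      (fun i => σ i * z i) ∈ Dz)
    (f : (Fin n → ℝ) → ℝ)
    (cE : (Fin n → ℝ) × (Fin s → ℝ) → Fin m₁ → ℝ)
    (cI : (Fin n → ℝ) × (Fin s → ℝ) → Fin m₂ → ℝ)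
    (cZ : (Fin n → ℝ) × (Fin s → ℝ) → Fin s → ℝ)
    (hf : ContDiffOn ℝ 2 f Dt)
    (hcE : ContDiffOn ℝ 2 cE (Dt ×ˢ Dz))
    (hcI : ContDiffOn ℝ 2 cI (Dt ×ˢ Dz))
    (hcZ : ContDiffOn ℝ 2 cZ (Dt ×ˢ Dz))
    (hlow : ∀ p ∈ Dt ×ˢ Dz, ∀ i j : Fin s, i ≤ j → jac2 cZ p i j = 0)
    (tstar : Fin n → ℝ) (zstar : Fin s → ℝ)
    (ht : tstar ∈ Dt) (hz : zstar ∈ Dz)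
    (hfeasE : cE (tstar, vabs zstar) = 0)
    (hfeasI : ∀ j, 0 ≤ cI (tstar, vabs zstar) j)
    (hfeasZ : cZ (tstar, vabs zstar) = zstar)
    (hmin : IsLocalMinOn (fun q : (Fin n → ℝ) × (Fin s → ℝ) => f q.1)
      {q | q.1 ∈ Dt ∧ q.2 ∈ Dz ∧ cE (q.1, vabs q.2) = 0 ∧
        (∀ j, 0 ≤ cI (q.1, vabs q.2) j) ∧ cZ (q.1, vabs q.2) = q.2}
      (tstar, zstar))
    (hLIKQ : (likqJ cE cI cZ (tstar, vabs zstar) (fun i => Real.sign (zstar i))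
        (fun j => cI (tstar, vabs zstar) j = 0) (fun i => zstar i = 0)).rank
      = m₁ + Fintype.card {j // cI (tstar, vabs zstar) j = 0} +
          Fintype.card {i // zstar i = 0})
    -- kink stationarity multipliers
    (lE : Fin m₁ → ℝ) (lI : Fin m₂ → ℝ) (lZ : Fin s → ℝ)
    (hstat : (fun j => fderiv ℝ f tstar (Pi.single j 1)) +
      (jac1 cE (tstar, vabs zstar))ᵀ *ᵥ lE -
      (jac1 cI (tstar, vabs zstar))ᵀ *ᵥ lI +
      (jac1 cZ (tstar, vabs zstar))ᵀ *ᵥ lZ = 0)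
    (hsig : ∀ i, zstar i ≠ 0 →
      ((jac2 cE (tstar, vabs zstar))ᵀ *ᵥ lE -
        (jac2 cI (tstar, vabs zstar))ᵀ *ᵥ lI +
        (jac2 cZ (tstar, vabs zstar))ᵀ *ᵥ lZ) i = Real.sign (zstar i) * lZ i)
    (hlI : ∀ j, 0 ≤ lI j)
    (hlIc : lI ⬝ᵥ cI (tstar, vabs zstar) = 0) :
    ∀ d : Fin n → ℝ,
      likqJ cE cI cZ (tstar, vabs zstar) (fun i => Real.sign (zstar i))
        (fun j => cI (tstar, vabs zstar) j = 0) (fun i => zstar i = 0) *ᵥ d = 0 →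
      0 ≤ fderiv ℝ (fderiv ℝ (Lagr f cE cI cZ lE lI lZ)) (tstar, vabs zstar)
            (d, ((sel fun i => zstar i ≠ 0)ᵀ * ((sel fun i => zstar i ≠ 0) *
              (Matrix.diagonal (fun i => Real.sign (zstar i)) *
                Wmat cZ (tstar, vabs zstar) (fun i => Real.sign (zstar i))))) *ᵥ d)
            (d, ((sel fun i => zstar i ≠ 0)ᵀ * ((sel fun i => zstar i ≠ 0) *
              (Matrix.diagonal (fun i => Real.sign (zstar i)) *
                Wmat cZ (tstar, vabs zstar) (fun i => Real.sign (zstar i))))) *ᵥ d) := by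
  intro d hd
  set σ : Fin s → ℝ := fun i => Real.sign (zstar i)
  set p : (Fin n → ℝ) × (Fin s → ℝ) := (tstar, vabs zstar)
  have hp : scaleSnd σ (tstar, zstar) = p := scaleSnd_sign_self tstar zstar
  have hpD : p ∈ Dt ×ˢ Dz := by
    refine ⟨ht, show vabs zstar ∈ Dz from ?_⟩
    convert hsym zstar hz σ fun i => Real.sign_apply_eq _ using 1
    exact funext fun i => (Real.sign_mul_self_eq_abs (zstar i)).symm
  have hC2 : ∀ {m} {c : (Fin n → ℝ) × (Fin s → ℝ) → Fin m → ℝ},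
      ContDiffOn ℝ 2 c (Dt ×ˢ Dz) → ContDiffAt ℝ 2 c p :=
    fun h => h.contDiffAt ((hDt.prod hDz).mem_nhds hpD)
  obtain ⟨γ, hγ0, hγ, hγ', hγG⟩ := exists_curve_branchMap_eq_zero cE cI cZ σ _ _ hp
    (hC2 hcE) (hC2 hcI) (hC2 hcZ) (hlow p hpD)
    (Matrix.mulVec_surjective_of_rank_eq_card _
      (hLIKQ.trans (by simp [Fintype.card_sum, add_assoc])))
    hfeasE (fun _ hj => hj) (fun _ hi => hi) hfeasZ hd
  have hminγ := isLocalMin_of_branchMap_eq_zero hDt hDz ht hz (hC2 hcI).continuousAt hfeasI hmin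
    hγ0 hγ.continuousAt hγG
  have key := lagr_hessian_nonneg_of_branch_curve cE cI cZ σ _ _ f lE lI lZ (hγ0 ▸ hp) hγ hγ'
    (hf.contDiffAt (hDt.mem_nhds ht)) (hC2 hcE) (hC2 hcI) (hC2 hcZ)
    (fun i hi => by simp [σ, hi]) (fun i hi => Real.sign_mul_sign_of_ne_zero hi)
    (fun j hj => eq_zero_of_dotProduct_eq_zero_of_nonneg hlI hfeasI hlIc hj) hstat hsig hminγ hγG
  rwa [sel_transpose_mul_sel_mul_diagonal_sign, ← mulVec_mulVec]

/-- Second order necessary conditions for the abs-normal NLP under LIKQ. -/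
theorem stmt16 {n s m₁ m₂ : ℕ}
    (Dt : Set (Fin n → ℝ)) (Dz : Set (Fin s → ℝ))
    (hDt : IsOpen Dt) (hDz : IsOpen Dz)
    (hsym : ∀ z ∈ Dz, ∀ σ : Fin s → ℝ, (∀ i, σ i = -1 ∨ σ i = 0 ∨ σ i = 1) →
      (fun i => σ i * z i) ∈ Dz)
    (f : (Fin n → ℝ) → ℝ)
    (cE : (Fin n → ℝ) × (Fin s → ℝ) → Fin m₁ → ℝ)
    (cI : (Fin n → ℝ) × (Fin s → ℝ) → Fin m₂ → ℝ)
    (cZ : (Fin n → ℝ) × (Fin s → ℝ) → Fin s → ℝ)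
    (hf : ContDiffOn ℝ 2 f Dt)
    (hcE : ContDiffOn ℝ 2 cE (Dt ×ˢ Dz))
    (hcI : ContDiffOn ℝ 2 cI (Dt ×ˢ Dz))
    (hcZ : ContDiffOn ℝ 2 cZ (Dt ×ˢ Dz))
    (hlow : ∀ p ∈ Dt ×ˢ Dz, ∀ i j : Fin s, i ≤ j → jac2 cZ p i j = 0)
    (tstar : Fin n → ℝ) (zstar : Fin s → ℝ)
    (ht : tstar ∈ Dt) (hz : zstar ∈ Dz)
    (hfeasE : cE (tstar, vabs zstar) = 0)
    (hfeasI : ∀ j, 0 ≤ cI (tstar, vabs zstar) j)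
    (hfeasZ : cZ (tstar, vabs zstar) = zstar)
    (hmin : IsLocalMinOn (fun q : (Fin n → ℝ) × (Fin s → ℝ) => f q.1)
      {q | q.1 ∈ Dt ∧ q.2 ∈ Dz ∧ cE (q.1, vabs q.2) = 0 ∧
        (∀ j, 0 ≤ cI (q.1, vabs q.2) j) ∧ cZ (q.1, vabs q.2) = q.2}
      (tstar, zstar))
    (hLIKQ : (likqJ cE cI cZ (tstar, vabs zstar) (fun i => Real.sign (zstar i))
        (fun j => cI (tstar, vabs zstar) j = 0) (fun i => zstar i = 0)).rank
      = m₁ + Fintype.card {j // cI (tstar, vabs zstar) j = 0} +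
          Fintype.card {i // zstar i = 0})
    -- kink stationarity multipliers
    (lE : Fin m₁ → ℝ) (lI : Fin m₂ → ℝ) (lZ : Fin s → ℝ)
    (hstat : (fun j => fderiv ℝ f tstar (Pi.single j 1)) +
      (jac1 cE (tstar, vabs zstar))ᵀ *ᵥ lE -
      (jac1 cI (tstar, vabs zstar))ᵀ *ᵥ lI +
      (jac1 cZ (tstar, vabs zstar))ᵀ *ᵥ lZ = 0)
    (hgrow : ∀ i, zstar i = 0 →
      |lZ i| ≤ ((jac2 cE (tstar, vabs zstar))ᵀ *ᵥ lE -
        (jac2 cI (tstar, vabs zstar))ᵀ *ᵥ lI +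
        (jac2 cZ (tstar, vabs zstar))ᵀ *ᵥ lZ) i)
    (hsig : ∀ i, zstar i ≠ 0 →
      ((jac2 cE (tstar, vabs zstar))ᵀ *ᵥ lE -
        (jac2 cI (tstar, vabs zstar))ᵀ *ᵥ lI +
        (jac2 cZ (tstar, vabs zstar))ᵀ *ᵥ lZ) i = Real.sign (zstar i) * lZ i)
    (hlI : ∀ j, 0 ≤ lI j)
    (hlIc : lI ⬝ᵥ cI (tstar, vabs zstar) = 0) :
    ∀ d : Fin n → ℝ,
      likqJ cE cI cZ (tstar, vabs zstar) (fun i => Real.sign (zstar i))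
        (fun j => cI (tstar, vabs zstar) j = 0) (fun i => zstar i = 0) *ᵥ d = 0 →
      0 ≤ fderiv ℝ (fderiv ℝ (Lagr f cE cI cZ lE lI lZ)) (tstar, vabs zstar)
            (d, ((sel fun i => zstar i ≠ 0)ᵀ * ((sel fun i => zstar i ≠ 0) *
              (Matrix.diagonal (fun i => Real.sign (zstar i)) *
                Wmat cZ (tstar, vabs zstar) (fun i => Real.sign (zstar i))))) *ᵥ d)
            (d, ((sel fun i => zstar i ≠ 0)ᵀ * ((sel fun i => zstar i ≠ 0) *
              (Matrix.diagonal (fun i => Real.sign (zstar i)) *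
                Wmat cZ (tstar, vabs zstar) (fun i => Real.sign (zstar i))))) *ᵥ d) :=
  stmt16_general Dt Dz hDt hDz hsym f cE cI cZ hf hcE hcI hcZ hlow tstar zstar ht hz hfeasE hfeasI
    hfeasZ hmin hLIKQ lE lI lZ hstat hsig hlI hlIc

end
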